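/- arXiv:2311.09202 — 3 statements merged into one kernel-verified Lean document; each statement's English description precedes it below -/
import Mathlib

section
/- Let n be a natural number and δ > 0. Suppose ξ₁,…,ξₙ are linearly independent unit vectors in a Hilbert space H such that |⟨ξⱼ, ξₖ⟩| ≤ δ for all distinct j,k ∈ {1,…,n}. Then there exists an orthonormal list ϑ₁,…,ϑₙ in H such that ‖ξⱼ − ϑⱼ‖ ≤ δn for all j ∈ {1,…,n} and span(ξ₁,…,ξₙ) = span(ϑ₁,…,ϑₙ). -/
/-!
Take the Löwdin (symmetric) orthogonalization `ϑ = ξ G^{-1/2}`, where `G` is the Gram matrix of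
`ξ`. Since `G^{-1/2} G G^{-1/2} = 1`, the family `ϑ` is orthonormal, and it spans the same space
because it lies in the span of `ξ` and has as many independent vectors. The Gram matrix of
`ξ - ϑ` is `(1 - G^{-1/2}) G (1 - G^{-1/2}) = (G^{1/2} - 1)^2`, so `‖ξ_j - ϑ_j‖^2` is at most
`max (√λ - 1)^2` over the eigenvalues `λ` of `G`. As `G` has unit diagonal and off-diagonal
entries of size at most `δ`, Gershgorin's theorem gives `|λ - 1| ≤ δ (n - 1)`, and
`|√λ - 1| ≤ |λ - 1|`.
-/

open Finset
open scoped ComplexOrder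

theorem Real.abs_sqrt_sub_one_le_abs_sub_one (x : ℝ) : |√x - 1| ≤ |x - 1| := by
  rcases le_total x 0 with hx | hx
  · rw [Real.sqrt_eq_zero'.2 hx, abs_of_nonpos (by linarith), abs_of_nonpos (by linarith)]
    linarith
  · have hfactor : x - 1 = (√x - 1) * (√x + 1) := by nlinarith [Real.sq_sqrt hx]
    rw [hfactor, abs_mul, abs_of_nonneg (by positivity : 0 ≤ √x + 1)]
    exact le_mul_of_one_le_right (abs_nonneg _) (by linarith [Real.sqrt_nonneg x])

namespace Matrix

theorem norm_sub_one_le_of_mem_spectrum {K ι : Type*} [NormedField K] [Fintype ι]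
    [DecidableEq ι] {A : Matrix ι ι K} {δ : ℝ} (hdiag : ∀ i, A i i = 1)
    (hoff : ∀ i j, i ≠ j → ‖A i j‖ ≤ δ) {μ : K} (hμ : μ ∈ spectrum K A) :
    ‖μ - 1‖ ≤ δ * (Fintype.card ι - 1) := by
  rw [← spectrum_toLin', ← Module.End.hasEigenvalue_iff_mem_spectrum] at hμ
  obtain ⟨k, hk⟩ := eigenvalue_mem_ball hμ
  rw [Metric.mem_closedBall, hdiag, dist_eq_norm] at hk
  calc ‖μ - 1‖ ≤ ∑ j ∈ univ.erase k, ‖A k j‖ := hk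
    _ ≤ ∑ _j ∈ univ.erase k, δ := sum_le_sum fun j hj => hoff k j (ne_of_mem_erase hj).symm
    _ = δ * (Fintype.card ι - 1) := by
      rw [sum_const, card_erase_of_mem (mem_univ k), nsmul_eq_mul, card_univ,
        Nat.cast_sub (Fintype.card_pos_iff.2 ⟨k⟩), Nat.cast_one, mul_comm]

variable {𝕜 E ι κ : Type*} [RCLike 𝕜] [Fintype ι]

section ColumnCombination

variable [AddCommGroup E] [Module 𝕜 E]

def columnCombination (v : ι → E) (A : Matrix ι κ 𝕜) : κ → E := fun j => ∑ k, A k j • v k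

@[simp]
lemma columnCombination_one [DecidableEq ι] (v : ι → E) :
    columnCombination v (1 : Matrix ι ι 𝕜) = v := by
  ext j
  simp [columnCombination, one_apply, ite_smul]

lemma columnCombination_sub (v : ι → E) (A B : Matrix ι κ 𝕜) :
    columnCombination v (A - B) = columnCombination v A - columnCombination v B := by
  ext j
  simp [columnCombination, sub_smul]

lemma span_range_columnCombination_le (v : ι → E) (A : Matrix ι κ 𝕜) :
    Submodule.span 𝕜 (Set.range (columnCombination v A)) ≤ Submodule.span 𝕜 (Set.range v) := by
  rw [Submodule.span_le]
  rintro - ⟨j, rfl⟩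
  exact Submodule.sum_mem _ fun k _ => Submodule.smul_mem _ _ (Submodule.subset_span ⟨k, rfl⟩)

end ColumnCombination

lemma gram_columnCombination [SeminormedAddCommGroup E] [InnerProductSpace 𝕜 E]
    (v : ι → E) (A : Matrix ι κ 𝕜) :
    gram 𝕜 (columnCombination v A) = Aᴴ * gram 𝕜 v * A := by
  ext i j
  rw [gram_apply, columnCombination, columnCombination, ← star_dotProduct_gram_mulVec]
  simp only [dotProduct, Pi.star_apply, RCLike.star_def, mulVec, gram_apply, mul_sum, mul_apply,
    conjTranspose_apply, sum_mul, mul_assoc]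
  exact sum_comm

variable [DecidableEq ι]

lemma cfc_mul_mul_cfc {A : Matrix ι ι 𝕜} (f g : ℝ → ℝ) :
    cfc f A * A * cfc g A = cfc (fun x => f x * x * g x) A := by
  have hcont (h : ℝ → ℝ) : ContinuousOn h (spectrum ℝ A) := A.finite_real_spectrum.continuousOn h
  by_cases hA : IsSelfAdjoint A
  · rw [cfc_mul _ _ A (hcont _) (hcont _), cfc_mul _ _ A (hcont _) (hcont _), cfc_id' ℝ A]
  · simp [cfc_apply_of_not_predicate _ hA]

open scoped MatrixOrder in
lemma diag_le_of_le_algebraMap {A : Matrix ι ι 𝕜} {c : ℝ} (h : A ≤ algebraMap ℝ _ c) (i : ι) :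
    A i i ≤ (c : 𝕜) := by
  simpa [algebraMap_matrix_apply] using (le_iff.1 h).diag_nonneg (i := i)

end Matrix

section SymmetricOrthogonalization

open Matrix
open scoped MatrixOrder

variable {𝕜 E ι : Type*} [RCLike 𝕜] [Fintype ι] [DecidableEq ι]
  [NormedAddCommGroup E] [InnerProductSpace 𝕜 E]

variable (𝕜) in
/-- Löwdin's orthogonalization `v G^{-1/2}`, with `G` the Gram matrix of `v`. -/
noncomputable def symmetricOrthogonalization (v : ι → E) : ι → E :=
  columnCombination v (cfc (fun x => (√x)⁻¹) (gram 𝕜 v))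

variable {v : ι → E}

lemma gram_symmetricOrthogonalization (hv : LinearIndependent 𝕜 v) :
    gram 𝕜 (symmetricOrthogonalization 𝕜 v) = 1 := by
  have hpos := (posDef_gram_of_linearIndependent hv).isStrictlyPositive
  have hS : IsSelfAdjoint (cfc (fun x => (√x)⁻¹) (gram 𝕜 v)) := cfc_predicate _ _
  rw [symmetricOrthogonalization, gram_columnCombination, hS.isHermitian.eq, cfc_mul_mul_cfc,
    ← cfc_const_one ℝ (gram 𝕜 v)]
  refine cfc_congr fun x hx => ?_
  have hx0 := hpos.spectrum_pos hx
  have hsx : √x ≠ 0 := (Real.sqrt_pos.2 hx0).ne'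
  field_simp
  exact (Real.sq_sqrt hx0.le).symm

lemma orthonormal_symmetricOrthogonalization (hv : LinearIndependent 𝕜 v) :
    Orthonormal 𝕜 (symmetricOrthogonalization 𝕜 v) :=
  gram_eq_one_iff_orthonormal.1 (gram_symmetricOrthogonalization hv)

lemma span_range_symmetricOrthogonalization (hv : LinearIndependent 𝕜 v) :
    Submodule.span 𝕜 (Set.range (symmetricOrthogonalization 𝕜 v)) =
      Submodule.span 𝕜 (Set.range v) := by
  have := FiniteDimensional.span_of_finite 𝕜 (Set.finite_range v)
  apply Submodule.eq_of_le_of_finrank_eq (span_range_columnCombination_le _ _)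
  rw [finrank_span_eq_card hv,
    finrank_span_eq_card (orthonormal_symmetricOrthogonalization hv).linearIndependent]

lemma gram_sub_symmetricOrthogonalization (hv : LinearIndependent 𝕜 v) :
    gram 𝕜 (v - symmetricOrthogonalization 𝕜 v) = cfc (fun x => (√x - 1) ^ 2) (gram 𝕜 v) := by
  have hpos := (posDef_gram_of_linearIndependent hv).isStrictlyPositive
  have hcont (f : ℝ → ℝ) := (gram 𝕜 v).finite_real_spectrum.continuousOn f
  set S := cfc (fun x => (√x)⁻¹) (gram 𝕜 v)
  have hS : IsSelfAdjoint S := cfc_predicate _ _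
  have hdiff : v - symmetricOrthogonalization 𝕜 v = columnCombination v (1 - S) := by
    rw [columnCombination_sub, columnCombination_one]
    rfl
  rw [hdiff, gram_columnCombination, conjTranspose_sub, conjTranspose_one, hS.isHermitian.eq,
    ← cfc_const_one ℝ (gram 𝕜 v), ← cfc_sub _ _ _ (hcont _) (hcont _), cfc_mul_mul_cfc]
  refine cfc_congr fun x hx => ?_
  have hx0 := hpos.spectrum_pos hx
  have hsx : √x ≠ 0 := (Real.sqrt_pos.2 hx0).ne'
  field_simp
  rw [Real.sq_sqrt hx0.le]
  ring

lemma norm_sub_symmetricOrthogonalization_sq_le (hv : LinearIndependent 𝕜 v) {c : ℝ}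
    (hc : ∀ x ∈ spectrum ℝ (gram 𝕜 v), (√x - 1) ^ 2 ≤ c) (j : ι) :
    ‖v j - symmetricOrthogonalization 𝕜 v j‖ ^ 2 ≤ c := by
  have := diag_le_of_le_algebraMap (gram_sub_symmetricOrthogonalization hv ▸
    cfc_le_algebraMap _ c _ hc (ha := (isHermitian_gram 𝕜 v).isSelfAdjoint)) j
  rw [gram_apply, Pi.sub_apply, inner_self_eq_norm_sq_to_K] at this
  exact_mod_cast this

end SymmetricOrthogonalization

theorem stmt0_general {H : Type*} [NormedAddCommGroup H] [InnerProductSpace ℂ H]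
    (n : ℕ) (δ : ℝ) (hδ : 0 < δ) (ξ : Fin n → H)
    (hind : LinearIndependent ℂ ξ) (hunit : ∀ j, ‖ξ j‖ = 1)
    (hsmall : ∀ j k, j ≠ k → ‖(@inner ℂ H _ (ξ j) (ξ k))‖ ≤ δ) :
    ∃ ϑ : Fin n → H, Orthonormal ℂ ϑ ∧ (∀ j, ‖ξ j - ϑ j‖ ≤ δ * n) ∧
      Submodule.span ℂ (Set.range ξ) = Submodule.span ℂ (Set.range ϑ) := by
  have hdiag (j : Fin n) : Matrix.gram ℂ ξ j j = 1 := by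
    rw [Matrix.gram_apply, inner_self_eq_norm_sq_to_K, hunit]
    norm_num
  have hspectrum (x : ℝ) (hx : x ∈ spectrum ℝ (Matrix.gram ℂ ξ)) : |x - 1| ≤ δ * n := by
    have hx' : (x : ℂ) ∈ spectrum ℂ (Matrix.gram ℂ ξ) := (spectrum.algebraMap_mem_iff ℂ).2 hx
    have := Matrix.norm_sub_one_le_of_mem_spectrum hdiag hsmall hx'
    rw [← Complex.ofReal_one, ← Complex.ofReal_sub, Complex.norm_real, Real.norm_eq_abs,
      Fintype.card_fin] at this
    linarith
  refine ⟨symmetricOrthogonalization ℂ ξ, orthonormal_symmetricOrthogonalization hind,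
    fun j => ?_, (span_range_symmetricOrthogonalization hind).symm⟩
  refine (pow_le_pow_iff_left₀ (norm_nonneg _) (by positivity) two_ne_zero).1
    (norm_sub_symmetricOrthogonalization_sq_le hind (fun x hx => ?_) j)
  have := (Real.abs_sqrt_sub_one_le_abs_sub_one x).trans (hspectrum x hx)
  exact sq_le_sq' (abs_le.1 this).1 (abs_le.1 this).2

/-- approximately orthonormal families of linearly independent unit
vectors can be repaired to exactly orthonormal families with the same span. -/
theorem stmt0 {H : Type*} [NormedAddCommGroup H] [InnerProductSpace ℂ H] [CompleteSpace H]
    (n : ℕ) (δ : ℝ) (hδ : 0 < δ) (ξ : Fin n → H)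
    (hind : LinearIndependent ℂ ξ) (hunit : ∀ j, ‖ξ j‖ = 1)
    (hsmall : ∀ j k, j ≠ k → ‖(@inner ℂ H _ (ξ j) (ξ k))‖ ≤ δ) :
    ∃ ϑ : Fin n → H, Orthonormal ℂ ϑ ∧ (∀ j, ‖ξ j - ϑ j‖ ≤ δ * n) ∧
      Submodule.span ℂ (Set.range ξ) = Submodule.span ℂ (Set.range ϑ) :=
  stmt0_general n δ hδ ξ hind hunit hsmall
end

section
/- Let H be a finite dimensional Hilbert space, p an orthogonal projection on H, and ξ₁,…,ξₙ unit vectors in H. Let δ, κ > 0 satisfy κ < 1/10 and 2δ ≤ 1/n. Assume ‖pξₖ‖ ≤ κ for all k and |⟨(I−p)ξⱼ, ξₖ⟩| ≤ δ for all distinct j,k. Then the vectors (I−p)ξ₁,…,(I−p)ξₙ are linearly independent. -/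
/-!
The Gram matrix of the vectors `ηₖ = (I - p) ξₖ` is strictly diagonally dominant: since `I - p` is
a symmetric projection, its off-diagonal entries are `⟪ηⱼ, ξₖ⟫`, of size at most `δ`, so a row
sums off the diagonal to at most `(n - 1) δ < 1/2`, while its diagonal entry is
`‖ηⱼ‖² = 1 - ‖p ξⱼ‖² ≥ 1 - κ² > 1/2`. By Gershgorin's theorem the Gram determinant is nonzero.
-/

open Finset
open scoped InnerProductSpace

section

variable {𝕜 E : Type*} [RCLike 𝕜] [SeminormedAddCommGroup E] [InnerProductSpace 𝕜 E]

open Matrix in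
theorem linearIndependent_of_sum_norm_inner_lt_norm_sq {ι : Type*} [Fintype ι] [DecidableEq ι]
    {v : ι → E} (h : ∀ j, ∑ k ∈ univ.erase j, ‖⟪v j, v k⟫_𝕜‖ < ‖v j‖ ^ 2) :
    LinearIndependent 𝕜 v :=
  linearIndependent_of_det_gram_ne_zero <| det_ne_zero_of_sum_row_lt_diag fun j => by
    simpa [← inner_self_re_eq_norm, inner_self_eq_norm_sq] using h j

namespace LinearMap.IsSymmetricProjection

variable {p : E →ₗ[𝕜] E}

theorem apply_sub_apply_self (hp : p.IsSymmetricProjection) (x : E) : p (x - p x) = 0 := by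
  rw [map_sub, ← Module.End.mul_apply, hp.isIdempotentElem.eq, sub_self]

theorem inner_sub_apply_self_apply (hp : p.IsSymmetricProjection) (x y : E) :
    ⟪x - p x, p y⟫_𝕜 = 0 := by
  rw [← hp.isSymmetric, hp.apply_sub_apply_self, inner_zero_left]

theorem inner_sub_apply_self_sub_apply_self (hp : p.IsSymmetricProjection) (x y : E) :
    ⟪x - p x, y - p y⟫_𝕜 = ⟪x - p x, y⟫_𝕜 := by
  rw [inner_sub_right, hp.inner_sub_apply_self_apply, sub_zero]

theorem norm_sub_apply_self_sq (hp : p.IsSymmetricProjection) (x : E) :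
    ‖x - p x‖ ^ 2 = ‖x‖ ^ 2 - ‖p x‖ ^ 2 := by
  have hx := norm_add_sq_eq_norm_sq_add_norm_sq_of_inner_eq_zero (𝕜 := 𝕜) (p x) (x - p x) <| by
    rw [← inner_conj_symm, hp.inner_sub_apply_self_apply, map_zero]
  rw [add_sub_cancel] at hx
  linear_combination -hx

end LinearMap.IsSymmetricProjection

end

theorem stmt2_general {H : Type*} [NormedAddCommGroup H] [InnerProductSpace ℂ H] [FiniteDimensional ℂ H]
    (n : ℕ) (p : H →ₗ[ℂ] H) (hp : p ∘ₗ p = p) (hpa : LinearMap.adjoint p = p)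
    (ξ : Fin n → H) (hunit : ∀ k, ‖ξ k‖ = 1)
    (δ κ : ℝ) (hδ : 0 < δ) (hκ' : κ < 1/10) (hδn : 2 * δ ≤ 1 / n)
    (hpξ : ∀ k, ‖p (ξ k)‖ ≤ κ)
    (hip : ∀ j k, j ≠ k → ‖(@inner ℂ H _ (ξ j - p (ξ j)) (ξ k))‖ ≤ δ) :
    LinearIndependent ℂ (fun k => ξ k - p (ξ k)) := by
  have hP : p.IsSymmetricProjection :=
    ⟨hp, p.isSymmetric_iff_isSelfAdjoint.2 (LinearMap.isSelfAdjoint_iff'.2 hpa)⟩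
  refine linearIndependent_of_sum_norm_inner_lt_norm_sq fun j => ?_
  have hn : (1 : ℝ) ≤ n := by exact_mod_cast j.pos
  have hnδ : n * δ ≤ 1 / 2 := by
    rw [le_div_iff₀ (by linarith)] at hδn
    linarith
  have hκ : 0 ≤ κ := (norm_nonneg _).trans (hpξ j)
  calc ∑ k ∈ univ.erase j, ‖⟪ξ j - p (ξ j), ξ k - p (ξ k)⟫_ℂ‖
      ≤ ∑ k ∈ univ.erase j, δ := sum_le_sum fun k hk => by
        rw [hP.inner_sub_apply_self_sub_apply_self]
        exact hip j k (ne_of_mem_erase hk).symm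
    _ = (n - 1) * δ := by
        rw [sum_const, card_erase_of_mem (mem_univ j), card_univ, Fintype.card_fin,
          nsmul_eq_mul, Nat.cast_pred j.pos]
    _ < 1 - κ ^ 2 := by nlinarith
    _ ≤ ‖ξ j - p (ξ j)‖ ^ 2 := by
        rw [hP.norm_sub_apply_self_sq, hunit]
        nlinarith [norm_nonneg (p (ξ j)), hpξ j]

/-- under smallness conditions, the vectors (I-p)ξ₁,…,(I-p)ξₙ are
linearly independent. -/
theorem stmt2 {H : Type*} [NormedAddCommGroup H] [InnerProductSpace ℂ H] [FiniteDimensional ℂ H]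
    (n : ℕ) (p : H →ₗ[ℂ] H) (hp : p ∘ₗ p = p) (hpa : LinearMap.adjoint p = p)
    (ξ : Fin n → H) (hunit : ∀ k, ‖ξ k‖ = 1)
    (δ κ : ℝ) (hδ : 0 < δ) (hκ : 0 < κ) (hκ' : κ < 1/10) (hδn : 2 * δ ≤ 1 / n)
    (hpξ : ∀ k, ‖p (ξ k)‖ ≤ κ)
    (hip : ∀ j k, j ≠ k → ‖(@inner ℂ H _ (ξ j - p (ξ j)) (ξ k))‖ ≤ δ) :
    LinearIndependent ℂ (fun k => ξ k - p (ξ k)) :=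
  stmt2_general n p hp hpa ξ hunit δ κ hδ hκ' hδn hpξ hip
end

section
/- Let H be a finite dimensional Hilbert space, 0 < δ < 1/2, p an orthogonal projection on H, and u a unitary operator on H such that ‖(I−p)up‖²_HS ≤ δ·dim(H). Then there exists an operator v on H with vv* = v*v = p (a partial isometry which is unitary on the range of p, commuting with p) such that ‖(u−v)p‖²_HS ≤ 4δ·dim(H). -/
/-! Write `p` as the orthogonal projection onto `K` and take singular bases `e`, `f` of `K` for
the compression `b = p u p`, so that `b eᵢ = ‖b eᵢ‖ fᵢ`. The partial isometry `v` mapping `eᵢ` to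
`fᵢ` on `K` and vanishing on `Kᗮ` satisfies
`‖u eᵢ - fᵢ‖² = 2 - 2‖b eᵢ‖ ≤ 2 (1 - ‖b eᵢ‖²) = 2 ‖(1 - p) u eᵢ‖²`,
and summing over `i` gives `‖(u - v) p‖²_HS ≤ 2 ‖(1 - p) u p‖²_HS ≤ 2 δ dim H`. -/

/-- The squared Hilbert–Schmidt norm of an operator on a finite dimensional
complex Hilbert space: ‖s‖²_HS = tr(s*s). -/
noncomputable def hsNormSq {H : Type*} [NormedAddCommGroup H] [InnerProductSpace ℂ H]
    [FiniteDimensional ℂ H] (s : H →ₗ[ℂ] H) : ℝ :=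
  (LinearMap.trace ℂ H (LinearMap.adjoint s ∘ₗ s)).re

open Module LinearMap InnerProductSpace

section
variable {𝕜 E F ι : Type*} [RCLike 𝕜]
  [NormedAddCommGroup E] [InnerProductSpace 𝕜 E] [NormedAddCommGroup F] [InnerProductSpace 𝕜 F]

theorem orthonormal_inv_norm_smul_of_pairwise_inner_eq_zero {v : ι → E}
    (hv : Pairwise fun i j => ⟪v i, v j⟫_𝕜 = 0) :
    Orthonormal 𝕜 fun i : {i | v i ≠ 0} => (‖v i‖⁻¹ : 𝕜) • v i := by
  refine ⟨fun i => norm_smul_inv_norm i.prop, fun i j hij => ?_⟩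
  simp [inner_smul_left, inner_smul_right, hv (Subtype.coe_ne_coe.mpr hij)]

/-- Singular value decomposition: for an eigenbasis `e` of `T† T` the vectors `T (e i)` are
pairwise orthogonal, and `f` extends the normalised nonzero ones. -/
theorem LinearMap.exists_orthonormalBasis_apply_eq_norm_smul [FiniteDimensional 𝕜 E]
    [FiniteDimensional 𝕜 F] {n : ℕ} (T : E →ₗ[𝕜] F) (hE : finrank 𝕜 E = n)
    (hF : finrank 𝕜 F = n) :
    ∃ (e : OrthonormalBasis (Fin n) 𝕜 E) (f : OrthonormalBasis (Fin n) 𝕜 F),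
      ∀ i, T (e i) = (‖T (e i)‖ : 𝕜) • f i := by
  have hT := T.isSymmetric_adjoint_comp_self
  let e := hT.eigenvectorBasis hE
  have horth : Pairwise fun i j => ⟪T (e i), T (e j)⟫_𝕜 = 0 := fun i j hij => by
    dsimp only
    rw [← adjoint_inner_right, ← comp_apply, hT.apply_eigenvectorBasis, inner_smul_right,
      e.orthonormal.2 hij, mul_zero]
  obtain ⟨f, hf⟩ := (orthonormal_inv_norm_smul_of_pairwise_inner_eq_zero
    horth).exists_orthonormalBasis_extension_of_card_eq
    (v := fun i => (‖T (e i)‖⁻¹ : 𝕜) • T (e i)) (by simpa using hF)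
  refine ⟨e, f, fun i => ?_⟩
  by_cases hi : T (e i) = 0
  · simp [hi]
  · rw [hf i hi, smul_inv_smul₀ (by simpa using hi)]

variable (K : Submodule 𝕜 E) [K.HasOrthogonalProjection]

theorem Submodule.norm_sub_sq_le_two_mul_norm_sub_starProjection_sq {x : E} {y : K}
    (hx : ‖x‖ = 1) (hy : ‖y‖ = 1)
    (hxy : K.orthogonalProjectionOnto x = (‖K.orthogonalProjectionOnto x‖ : 𝕜) • y) :
    ‖x - y‖ ^ 2 ≤ 2 * ‖x - K.starProjection x‖ ^ 2 := by
  set t := ‖K.orthogonalProjectionOnto x‖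
  have hinner : ⟪(y : E), x⟫_𝕜 = t := by
    rw [← K.inner_orthogonalProjectionOnto_eq_of_mem_left, hxy, inner_smul_right,
      inner_self_eq_norm_sq_to_K, hy]
    simp
  have hpyth : ‖x‖ ^ 2 = t ^ 2 + ‖x - K.starProjection x‖ ^ 2 := by
    rw [K.norm_sq_eq_add_norm_sq_projection x, K.orthogonalProjectionOnto_orthogonal]
    rfl
  have ht : t ≤ 1 := by nlinarith [norm_nonneg (K.orthogonalProjectionOnto x)]
  rw [@norm_sub_sq 𝕜, ← inner_re_symm, hinner, hx, Submodule.norm_coe, hy]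
  simp only [RCLike.ofReal_re]
  nlinarith [norm_nonneg (K.orthogonalProjectionOnto x)]

noncomputable def Submodule.partialIsometry (w : K ≃ₗᵢ[𝕜] K) : E →ₗ[𝕜] E :=
  K.subtype ∘ₗ w.toLinearMap ∘ₗ (K.orthogonalProjectionOnto : E →ₗ[𝕜] K)

variable {K}

@[simp]
theorem Submodule.partialIsometry_apply (w : K ≃ₗᵢ[𝕜] K) (x : E) :
    K.partialIsometry w x = w (K.orthogonalProjectionOnto x) := rfl

theorem Submodule.adjoint_partialIsometry [FiniteDimensional 𝕜 E] (w : K ≃ₗᵢ[𝕜] K) :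
    adjoint (K.partialIsometry w) = K.partialIsometry w.symm := by
  refine ((eq_adjoint_iff _ _).mpr fun x y => ?_).symm
  rw [partialIsometry_apply, partialIsometry_apply,
    ← K.inner_orthogonalProjectionOnto_eq_of_mem_left,
    ← K.inner_orthogonalProjectionOnto_eq_of_mem_right, ← w.inner_map_map, w.apply_symm_apply]

theorem Submodule.partialIsometry_comp_partialIsometry_symm (w : K ≃ₗᵢ[𝕜] K) :
    K.partialIsometry w ∘ₗ K.partialIsometry w.symm = K.starProjection := by
  ext x
  simp [K.orthogonalProjectionOnto_mem_subspace_eq_self]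

theorem Submodule.partialIsometry_comp_starProjection (w : K ≃ₗᵢ[𝕜] K) :
    K.partialIsometry w ∘ₗ K.starProjection = K.starProjection ∘ₗ K.partialIsometry w := by
  ext x
  simp [orthogonalProjectionOnto_starProjection_of_le le_rfl]

end

section
variable {H : Type*} [NormedAddCommGroup H] [InnerProductSpace ℂ H] [FiniteDimensional ℂ H]

theorem hsNormSq_nonneg (s : H →ₗ[ℂ] H) : 0 ≤ hsNormSq s := by
  rw [hsNormSq, trace_eq_sum_inner _ (stdOrthonormalBasis ℂ H), Complex.re_sum]
  refine Finset.sum_nonneg fun i _ => ?_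
  rw [comp_apply, adjoint_inner_right]
  exact inner_self_nonneg (𝕜 := ℂ)

theorem hsNormSq_comp_starProjection (K : Submodule ℂ H) {ι : Type*} [Fintype ι]
    (e : OrthonormalBasis ι ℂ K) (s : H →ₗ[ℂ] H) :
    hsNormSq (s ∘ₗ K.starProjection) = ∑ i, ‖s (e i)‖ ^ 2 := by
  set t := s ∘ₗ (K.starProjection : H →ₗ[ℂ] H)
  have hfac : adjoint t ∘ₗ t =
      (adjoint t ∘ₗ t ∘ₗ K.subtype) ∘ₗ (K.orthogonalProjectionOnto : H →ₗ[ℂ] K) := by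
    ext x
    simp [t, K.starProjection_eq_self_iff.mpr (K.starProjection_apply_mem x)]
  rw [hsNormSq, hfac, trace_comp_comm', trace_eq_sum_inner _ e, Complex.re_sum]
  congr with i
  rw [comp_apply, ContinuousLinearMap.coe_coe, K.inner_orthogonalProjectionOnto_eq_of_mem_left,
    comp_apply, comp_apply, adjoint_inner_right]
  refine (inner_self_eq_norm_sq (𝕜 := ℂ) _).trans ?_
  simp only [t, comp_apply, ContinuousLinearMap.coe_coe, K.starProjection_mem_subspace_eq_self]

theorem Submodule.exists_hsNormSq_sub_partialIsometry_comp_starProjection_le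
    (K : Submodule ℂ H) {u : H →ₗ[ℂ] H} (hu : ∀ x, ‖u x‖ = ‖x‖) :
    ∃ w : K ≃ₗᵢ[ℂ] K, hsNormSq ((u - K.partialIsometry w) ∘ₗ K.starProjection) ≤
      2 * hsNormSq ((LinearMap.id - (K.starProjection : H →ₗ[ℂ] H)) ∘ₗ u ∘ₗ K.starProjection) := by
  obtain ⟨e, f, hef⟩ := ((K.orthogonalProjectionOnto : H →ₗ[ℂ] K) ∘ₗ u ∘ₗ
    K.subtype).exists_orthonormalBasis_apply_eq_norm_smul rfl rfl
  refine ⟨e.repr.trans f.repr.symm, ?_⟩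
  rw [hsNormSq_comp_starProjection K e, ← LinearMap.comp_assoc,
    hsNormSq_comp_starProjection K e, Finset.mul_sum]
  refine Finset.sum_le_sum fun i _ => ?_
  have hv : K.partialIsometry (e.repr.trans f.repr.symm) (e i) = f i := by simp
  simpa [hv] using K.norm_sub_sq_le_two_mul_norm_sub_starProjection_sq
    ((hu _).trans ((K.norm_coe _).trans (e.orthonormal.1 i))) (f.orthonormal.1 i) (hef i)

end

theorem stmt4_general {H : Type*} [NormedAddCommGroup H] [InnerProductSpace ℂ H] [FiniteDimensional ℂ H]
    (δ : ℝ)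
    (p : H →ₗ[ℂ] H) (hp : p ∘ₗ p = p) (hpa : LinearMap.adjoint p = p)
    (u : H →ₗ[ℂ] H) (hu1 : LinearMap.adjoint u ∘ₗ u = LinearMap.id)
    (hinv : hsNormSq ((LinearMap.id - p) ∘ₗ u ∘ₗ p) ≤ δ * Module.finrank ℂ H) :
    ∃ v : H →ₗ[ℂ] H,
      v ∘ₗ LinearMap.adjoint v = p ∧ LinearMap.adjoint v ∘ₗ v = p ∧
      v ∘ₗ p = p ∘ₗ v ∧
      hsNormSq ((u - v) ∘ₗ p) ≤ 4 * δ * Module.finrank ℂ H := by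
  have hproj : p.IsSymmetricProjection := ⟨hp, (isSymmetric_iff_isSelfAdjoint p).mpr hpa⟩
  obtain ⟨K, _, rfl⟩ := isSymmetricProjection_iff_eq_coe_starProjection.mp hproj
  have hu : ∀ x, ‖u x‖ = ‖x‖ := (LinearMap.norm_map_iff_inner_map_map u).mpr fun x y => by
    rw [← adjoint_inner_right, ← comp_apply, hu1, id_apply]
  obtain ⟨w, hw⟩ := K.exists_hsNormSq_sub_partialIsometry_comp_starProjection_le hu
  refine ⟨K.partialIsometry w, ?_, ?_, K.partialIsometry_comp_starProjection w, ?_⟩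
  · rw [Submodule.adjoint_partialIsometry]
    exact Submodule.partialIsometry_comp_partialIsometry_symm w
  · rw [Submodule.adjoint_partialIsometry]
    simpa using Submodule.partialIsometry_comp_partialIsometry_symm w.symm
  · -- `δ * finrank ℂ H` bounds a Hilbert–Schmidt norm, hence is nonnegative
    linarith [hsNormSq_nonneg ((LinearMap.id - (K.starProjection : H →ₗ[ℂ] H)) ∘ₗ u ∘ₗ
      K.starProjection)]

/-- almost invariant projections can be repaired: if
‖(I-p)up‖²_HS ≤ δ·dim H then there is v with vv* = v*v = p, commuting with p,
and ‖(u-v)p‖²_HS ≤ 4δ·dim H. -/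
theorem stmt4 {H : Type*} [NormedAddCommGroup H] [InnerProductSpace ℂ H] [FiniteDimensional ℂ H]
    (δ : ℝ) (hδ0 : 0 < δ) (hδ1 : δ < 1/2)
    (p : H →ₗ[ℂ] H) (hp : p ∘ₗ p = p) (hpa : LinearMap.adjoint p = p)
    (u : H →ₗ[ℂ] H) (hu1 : LinearMap.adjoint u ∘ₗ u = LinearMap.id)
    (hu2 : u ∘ₗ LinearMap.adjoint u = LinearMap.id)
    (hinv : hsNormSq ((LinearMap.id - p) ∘ₗ u ∘ₗ p) ≤ δ * Module.finrank ℂ H) :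
    ∃ v : H →ₗ[ℂ] H,
      v ∘ₗ LinearMap.adjoint v = p ∧ LinearMap.adjoint v ∘ₗ v = p ∧
      v ∘ₗ p = p ∘ₗ v ∧
      hsNormSq ((u - v) ∘ₗ p) ≤ 4 * δ * Module.finrank ℂ H :=
  stmt4_general δ p hp hpa u hu1 hinv
end
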